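/- arXiv:1207.5699 — 2 statements merged into one kernel-verified Lean document; each statement's English description precedes it below -/
import Mathlib

section
/- Isospectrality for forest-supported Hermitian matrices: let A and B be N×N Hermitian complex matrices with A_ii = B_ii for every i and |A_ik| = |B_ik| for all i ≠ k. If the support graph of A contains no cycle (i.e., is a forest), then A and B have the same characteristic polynomial, and hence the same eigenvalues with multiplicities. -/
open scoped Classical

/-- The support graph of a matrix: an edge `{i,k}` (for `i ≠ k`) whenever `A i k ≠ 0`. -/
def supportGraph {N : ℕ} (A : Matrix (Fin N) (Fin N) ℂ) : SimpleGraph (Fin N) :=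
  SimpleGraph.fromRel fun i k => A i k ≠ 0

/-- In an acyclic graph, a permutation all of whose non-fixed points are moved to
adjacent vertices must be an involution. -/
lemma perm_involutive_of_acyclic {N : ℕ} (G : SimpleGraph (Fin N)) (hG : G.IsAcyclic)
    (σ : Equiv.Perm (Fin N)) (hadj : ∀ i, σ i ≠ i → G.Adj i (σ i)) :
    ∀ j, σ (σ j) = j := by
  intro j
  by_contra hj
  have hσj : σ j ≠ j := fun h => hj (by rw [h, h])
  set n := Function.minimalPeriod σ j with hn
  have hper : Function.IsPeriodicPt σ (orderOf σ) j := by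
    show σ^[orderOf σ] j = j
    rw [Equiv.Perm.iterate_eq_pow, pow_orderOf_eq_one]; rfl
  have npos : 0 < n := hper.minimalPeriod_pos (orderOf_pos σ)
  have hnn : σ^[n] j = j := Function.iterate_minimalPeriod
  have inj : (Set.Iio n).InjOn (σ^[·] j) := Function.iterate_injOn_Iio_minimalPeriod
  have hne1 : n ≠ 1 := by
    intro h
    apply hσj
    have := hnn
    rwa [h, Function.iterate_one] at this
  have hne2 : n ≠ 2 := by
    intro h
    apply hj
    have := hnn
    rwa [h, show σ^[2] j = σ (σ j) from rfl] at this
  have h3 : 3 ≤ n := by omega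
  -- build the walk along the orbit
  have key : ∀ m, m ≤ n - 1 → ∃ W : G.Walk j (σ^[m] j),
      W.support = (List.range (m + 1)).map (σ^[·] j) := by
    intro m hm
    induction m with
    | zero =>
      exact ⟨SimpleGraph.Walk.nil, by simp [List.range_succ]⟩
    | succ m ih =>
      obtain ⟨W, hW⟩ := ih (by omega)
      have hne : σ^[m + 1] j ≠ σ^[m] j := by
        intro h
        have := inj (by simp only [Set.mem_Iio]; omega) (by simp only [Set.mem_Iio]; omega) h
        omega
      have hstep : σ (σ^[m] j) = σ^[m + 1] j := (Function.iterate_succ_apply' σ m j).symm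
      have hadj' : G.Adj (σ^[m] j) (σ^[m + 1] j) := by
        have := hadj (σ^[m] j) (by rw [hstep]; exact hne)
        rwa [hstep] at this
      refine ⟨W.concat hadj', ?_⟩
      rw [SimpleGraph.Walk.support_concat, hW,
        List.range_succ (n := m + 1), List.map_append]
      rfl
  obtain ⟨W, hW⟩ := key (n - 1) le_rfl
  have hWnodup : W.support.Nodup := by
    rw [hW]
    refine List.Nodup.map_on ?_ List.nodup_range
    intro x hx y hy hxy
    have hx' : x < n := by rw [List.mem_range] at hx; omega
    have hy' : y < n := by rw [List.mem_range] at hy; omega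
    exact inj hx' hy' hxy
  have hadjlast : G.Adj j (σ^[n - 1] j) := by
    have hstep : σ (σ^[n - 1] j) = σ^[n] j := by
      rw [← Function.iterate_succ_apply' σ (n - 1) j]
      congr 1; omega
    have hne : σ (σ^[n - 1] j) ≠ σ^[n - 1] j := by
      rw [hstep, hnn]
      intro h
      have h0 : (⇑σ)^[0] j = (⇑σ)^[n - 1] j := h
      have := inj (Set.mem_Iio.mpr (by omega)) (Set.mem_Iio.mpr (by omega)) h0
      omega
    have := hadj _ hne
    rw [hstep, hnn] at this
    exact this.symm
  have hWpath : W.IsPath := (SimpleGraph.Walk.isPath_def W).mpr hWnodup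
  have hPeq := SimpleGraph.isAcyclic_iff_path_unique.mp hG
    (SimpleGraph.Path.singleton hadjlast) ⟨W, hWpath⟩
  have hlen : (SimpleGraph.Path.singleton hadjlast).1.length = W.length :=
    congrArg (fun p => p.1.length) hPeq
  have hlen1 : (SimpleGraph.Path.singleton hadjlast).1.length = 1 := rfl
  have hlenW : W.length + 1 = n := by
    have := W.length_support
    rw [hW] at this
    simp at this
    omega
  omega

/-- **Isospectrality for forest-supported Hermitian matrices.**  If `A` and `B` are
Hermitian with the same diagonal, `|A i k| = |B i k|` for all `i ≠ k`, and the support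
graph of `A` is a forest (contains no cycle), then `A` and `B` have the same
characteristic polynomial, hence the same eigenvalues with multiplicities. -/
theorem isospectral_of_forest_support (N : ℕ) (A B : Matrix (Fin N) (Fin N) ℂ)
    (hA : A.IsHermitian) (hB : B.IsHermitian)
    (hdiag : ∀ i, A i i = B i i)
    (habs : ∀ i k, i ≠ k → ‖A i k‖ = ‖B i k‖)
    (hforest : (supportGraph A).IsAcyclic) :
    A.charpoly = B.charpoly := by
  rw [Matrix.charpoly, Matrix.charpoly, Matrix.det_apply, Matrix.det_apply]
  refine Finset.sum_congr rfl fun σ _ => ?_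
  congr 1
  by_cases hz : ∃ i, σ i ≠ i ∧ A (σ i) i = 0
  · obtain ⟨i, hi, hAi⟩ := hz
    have hBi : B (σ i) i = 0 := by
      have := habs (σ i) i hi
      rw [hAi] at this
      simpa using this.symm
    rw [Finset.prod_eq_zero (Finset.mem_univ i), Finset.prod_eq_zero (Finset.mem_univ i)]
    · rw [Matrix.charmatrix_apply_ne _ _ _ hi, hBi]; simp
    · rw [Matrix.charmatrix_apply_ne _ _ _ hi, hAi]; simp
  · push_neg at hz
    have hadj : ∀ i, σ i ≠ i → (supportGraph A).Adj i (σ i) := by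
      intro i hi
      rw [supportGraph, SimpleGraph.fromRel_adj]
      exact ⟨fun h => hi h.symm, Or.inr (hz i hi)⟩
    have hinv : ∀ i, σ (σ i) = i := perm_involutive_of_acyclic _ hforest σ hadj
    set f : Fin N → Polynomial ℂ := fun i => Matrix.charmatrix A (σ i) i with hf
    set g : Fin N → Polynomial ℂ := fun i => Matrix.charmatrix B (σ i) i with hg
    have hfix : ∀ i, σ i = i → f i = g i := by
      intro i hi
      simp only [hf, hg, hi, Matrix.charmatrix_apply_eq, hdiag i]
    have hgne : ∀ i, g i ≠ 0 := by
      intro i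
      by_cases hi : σ i = i
      · simp only [hg, hi, Matrix.charmatrix_apply_eq]
        exact Polynomial.X_sub_C_ne_zero _
      · have hB0 : B (σ i) i ≠ 0 := by
          intro h
          have := habs (σ i) i hi
          rw [h] at this
          simp at this
          exact hz i hi this
        simp only [hg, Matrix.charmatrix_apply_ne _ _ _ hi, neg_ne_zero, ne_eq,
          Polynomial.C_eq_zero]
        exact hB0
    have hpair : ∀ i, f i * f (σ i) = g i * g (σ i) := by
      intro i
      by_cases hi : σ i = i
      · rw [hfix i hi, hi, hfix i hi]
      · have hi' : σ (σ i) ≠ σ i := by rw [hinv]; exact fun h => hi h.symm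
        have e1 : f i = -Polynomial.C (A (σ i) i) := Matrix.charmatrix_apply_ne _ _ _ hi
        have e2 : f (σ i) = -Polynomial.C (A i (σ i)) := by
          simp only [hf]
          rw [hinv i]
          exact Matrix.charmatrix_apply_ne _ _ _ (fun h => hi h.symm)
        have e3 : g i = -Polynomial.C (B (σ i) i) := Matrix.charmatrix_apply_ne _ _ _ hi
        have e4 : g (σ i) = -Polynomial.C (B i (σ i)) := by
          simp only [hg]
          rw [hinv i]
          exact Matrix.charmatrix_apply_ne _ _ _ (fun h => hi h.symm)
        rw [e1, e2, e3, e4, neg_mul_neg, neg_mul_neg, ← map_mul, ← map_mul]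
        congr 1
        have hAc : A i (σ i) = starRingEnd ℂ (A (σ i) i) := (hA.apply i (σ i)).symm
        have hBc : B i (σ i) = starRingEnd ℂ (B (σ i) i) := (hB.apply i (σ i)).symm
        rw [hAc, hBc, Complex.mul_conj, Complex.mul_conj]
        norm_cast
        rw [← Complex.sq_norm, ← Complex.sq_norm, habs (σ i) i hi]
    -- conclude products are equal via the field of rational functions
    have hφinj : Function.Injective (algebraMap (Polynomial ℂ) (RatFunc ℂ)) :=
      IsFractionRing.injective _ _
    set φ := algebraMap (Polynomial ℂ) (RatFunc ℂ) with hφ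
    have hφgne : ∀ i, φ (g i) ≠ 0 := fun i => by
      simpa using (map_ne_zero_iff φ hφinj).mpr (hgne i)
    have hprod1 : ∏ i, (φ (f i) / φ (g i)) = 1 := by
      refine Finset.prod_ninvolution (fun i => σ i) ?_ ?_ (fun i => Finset.mem_univ _) hinv
      · intro a
        rw [div_mul_div_comm, ← map_mul, ← map_mul, hpair a]
        exact div_self (by rw [map_mul]; exact mul_ne_zero (hφgne a) (hφgne (σ a)))
      · intro a ha
        by_contra h
        apply ha
        rw [hfix a h]
        exact div_self (hφgne a)
    rw [Finset.prod_div_distrib] at hprod1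
    have hdenom : ∏ i, φ (g i) ≠ 0 := Finset.prod_ne_zero_iff.mpr fun i _ => hφgne i
    have : ∏ i, φ (f i) = ∏ i, φ (g i) := by
      field_simp at hprod1
      exact hprod1
    rw [← map_prod, ← map_prod] at this
    exact hφinj this
end

section
/- Sign flips of bridge entries preserve the spectrum: let A be an N×N Hermitian complex matrix and let {p,q} be an edge of the support graph of A that lies on no cycle of the support graph (a bridge). Let B be the matrix that agrees with A in all entries except B_pq = −A_pq and B_qp = −A_qp. Then A and B have the same characteristic polynomial, and hence the same eigenvalues with multiplicities. -/
open scoped Classical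

/-- **Sign flips of bridge entries preserve the spectrum.**  Let `{p,q}` be an edge of the
support graph of a Hermitian matrix `A` lying on no cycle (a bridge: deleting it
disconnects `p` from `q`).  If `B` agrees with `A` except that `B p q = -A p q` and
`B q p = -A q p`, then `A` and `B` have the same characteristic polynomial, hence the
same eigenvalues with multiplicities. -/
theorem isospectral_of_bridge_sign_flip (N : ℕ) (A B : Matrix (Fin N) (Fin N) ℂ)
    (hA : A.IsHermitian) (p q : Fin N)
    (hedge : (supportGraph A).Adj p q)
    (hbridge : ¬ ((supportGraph A).deleteEdges {s(p, q)}).Reachable p q)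
    (hB : ∀ i k, B i k =
      if (i = p ∧ k = q) ∨ (i = q ∧ k = p) then -A i k else A i k) :
    A.charpoly = B.charpoly := by
  set G' := (supportGraph A).deleteEdges {s(p, q)} with hG'
  set d : Fin N → ℂ := fun i => if G'.Reachable p i then -1 else 1 with hd
  have hd2 : ∀ i, d i * d i = 1 := by
    intro i; by_cases h : G'.Reachable p i <;> simp [hd, h]
  have hdp : d p = -1 := by simp [hd, SimpleGraph.Reachable.refl]
  have hdq : d q = 1 := by simp [hd, hbridge]
  have hsame : ∀ i k, A i k ≠ 0 → ¬((i = p ∧ k = q) ∨ (i = q ∧ k = p)) → d i = d k := by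
    intro i k hik hcase
    by_cases hik' : i = k
    · rw [hik']
    · have hadj : G'.Adj i k := by
        rw [hG', SimpleGraph.deleteEdges_adj]
        constructor
        · exact SimpleGraph.fromRel_adj .. |>.2 ⟨hik', Or.inl hik⟩
        · simp only [Set.mem_singleton_iff, Sym2.eq_iff]
          rintro (⟨rfl, rfl⟩ | ⟨rfl, rfl⟩)
          · exact hcase (Or.inl ⟨rfl, rfl⟩)
          · exact hcase (Or.inr ⟨rfl, rfl⟩)
      have hiff : G'.Reachable p i ↔ G'.Reachable p k :=
        ⟨fun h => h.trans hadj.reachable, fun h => h.trans hadj.symm.reachable⟩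
      simp only [hd]
      by_cases h : G'.Reachable p i
      · rw [if_pos h, if_pos (hiff.1 h)]
      · rw [if_neg h, if_neg (fun hk => h (hiff.2 hk))]
  set D : Matrix (Fin N) (Fin N) ℂ := Matrix.diagonal d with hD
  have hDD : D * D = 1 := by
    rw [hD, Matrix.diagonal_mul_diagonal]
    rw [show (fun i => d i * d i) = fun _ => (1 : ℂ) from funext hd2]
    exact Matrix.diagonal_one
  have hBeq : B = D * A * D := by
    ext i k
    rw [hB i k]
    have hentry : (D * A * D) i k = d i * A i k * d k := by
      rw [Matrix.mul_diagonal, hD, Matrix.diagonal_mul]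
    rw [hentry]
    by_cases hcase : (i = p ∧ k = q) ∨ (i = q ∧ k = p)
    · rw [if_pos hcase]
      rcases hcase with ⟨rfl, rfl⟩ | ⟨rfl, rfl⟩
      · rw [hdp, hdq]; ring
      · rw [hdp, hdq]; ring
    · rw [if_neg hcase]
      by_cases hik : A i k = 0
      · rw [hik]; ring
      · rw [hsame i k hik hcase, mul_comm (d k), mul_assoc, hd2 k, mul_one]
  -- now show similarity preserves charpoly
  set C' : Matrix (Fin N) (Fin N) (Polynomial ℂ) := D.map Polynomial.C with hC'
  have hCC : C' * C' = 1 := by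
    rw [hC', ← Matrix.map_mul, hDD]
    simp
  have hcm : (D * A * D).charmatrix = C' * A.charmatrix * C' := by
    rw [Matrix.charmatrix, Matrix.charmatrix]
    have hmap : (Polynomial.C : ℂ →+* Polynomial ℂ).mapMatrix (D * A * D)
        = C' * (Polynomial.C : ℂ →+* Polynomial ℂ).mapMatrix A * C' := by
      simp [hC', Matrix.map_mul]
    rw [hmap, Matrix.mul_sub, Matrix.sub_mul]
    congr 1
    have hscal : C' * Matrix.scalar (Fin N) (Polynomial.X : Polynomial ℂ)
        = Matrix.scalar (Fin N) (Polynomial.X : Polynomial ℂ) * C' :=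
      (Matrix.scalar_commute _ (fun r' => Commute.all _ _) _).symm
    rw [hscal, mul_assoc, hCC, mul_one]
  have : (D * A * D).charpoly = A.charpoly := by
    rw [Matrix.charpoly, Matrix.charpoly, hcm, Matrix.det_mul, Matrix.det_mul]
    have : C'.det * A.charmatrix.det * C'.det = (C' * C').det * A.charmatrix.det := by
      rw [Matrix.det_mul]; ring
    rw [this, hCC, Matrix.det_one, one_mul]
  rw [hBeq, this]
end
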